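/- arXiv:1909.10824 — 6 statements merged into one kernel-verified Lean document; each statement's English description precedes it below -/
import Mathlib

section
/- Branching bisimilarity is an equivalence relation: the relation relating states s and t iff there exists a branching bisimulation relation containing (s,t) is reflexive, symmetric, and transitive. -/
/-!
Branching bisimulations are not closed under relational composition, so transitivity goes
through Basten's semi-branching bisimulations, in which a `τ`-step may also be answered by a
`τ`-path `t ⇒ t'` with `s ~ t'` and `s' ~ t'`. Relating states along such a path one step at a
time shows that semi-branching bisimulations do compose, so semi-branching bisimilarity is
transitive. Conversely, semi-branching bisimilarity has the stuttering property (a state on a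
`τ`-path between two states bisimilar to `s` is bisimilar to `s`), which makes it a branching
bisimulation; hence the two bisimilarities coincide.
-/

universe u v

variable {S : Type u} {Act : Type v}

/-- Reflexive-transitive closure of τ-steps: `t →τ ... →τ t'`. -/
def TauPath (tr : S → Act → S → Prop) (τ : Act) : S → S → Prop :=
  Relation.ReflTransGen (fun x y => tr x τ y)

/-- `R` is a branching bisimulation relation. -/
def IsBranchingBisim (tr : S → Act → S → Prop) (τ : Act) (R : S → S → Prop) : Prop :=
  Symmetric R ∧
  ∀ s t a s', R s t → tr s a s' →
    (a = τ ∧ R s' t) ∨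
    ∃ t' t'', TauPath tr τ t t' ∧ tr t' a t'' ∧ R s t' ∧ R s' t''

/-- Branching bisimilarity: related by some branching bisimulation. -/
def BranchingBisimilar (tr : S → Act → S → Prop) (τ : Act) (s t : S) : Prop :=
  ∃ R, IsBranchingBisim tr τ R ∧ R s t

/-- One τ-step staying inside the set `B`. -/
def StepIn (tr : S → Act → S → Prop) (τ : Act) (B : Set S) : S → S → Prop :=
  fun x y => x ∈ B ∧ y ∈ B ∧ tr x τ y

def IsSemiBranchingBisim (tr : S → Act → S → Prop) (τ : Act) (R : S → S → Prop) : Prop :=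
  Symmetric R ∧
  ∀ s t a s', R s t → tr s a s' →
    (a = τ ∧ ∃ t', TauPath tr τ t t' ∧ R s t' ∧ R s' t') ∨
    ∃ t' t'', TauPath tr τ t t' ∧ tr t' a t'' ∧ R s t' ∧ R s' t''

def SemiBranchingBisimilar (tr : S → Act → S → Prop) (τ : Act) (s t : S) : Prop :=
  ∃ R, IsSemiBranchingBisim tr τ R ∧ R s t

section

variable {tr : S → Act → S → Prop} {τ : Act}

lemma isBranchingBisim_eq : IsBranchingBisim tr τ (· = ·) := by
  refine ⟨fun _ _ h => h.symm, ?_⟩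
  rintro s _ a s' rfl hstep
  exact Or.inr ⟨s, s', .refl, hstep, rfl, rfl⟩

lemma IsBranchingBisim.isSemiBranchingBisim {R : S → S → Prop}
    (hR : IsBranchingBisim tr τ R) : IsSemiBranchingBisim tr τ R := by
  refine ⟨hR.1, fun s t a s' hst hstep => ?_⟩
  rcases hR.2 s t a s' hst hstep with ⟨rfl, hs't⟩ | hmatch
  · exact Or.inl ⟨rfl, t, .refl, hst, hs't⟩
  · exact Or.inr hmatch

lemma IsSemiBranchingBisim.exists_tauPath {R : S → S → Prop}
    (hR : IsSemiBranchingBisim tr τ R) {s s' t : S} (hst : R s t) (hpath : TauPath tr τ s s') :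
    ∃ t', TauPath tr τ t t' ∧ R s' t' := by
  induction hpath with
  | refl => exact ⟨t, .refl, hst⟩
  | tail _ hstep ih =>
    obtain ⟨v, htv, hv⟩ := ih
    rcases hR.2 _ _ _ _ hv hstep with ⟨_, v', hvv', _, hv'⟩ |
      ⟨v', v'', hvv', hstep', _, hv''⟩
    · exact ⟨v', htv.trans hvv', hv'⟩
    · exact ⟨v'', .tail (htv.trans hvv') hstep', hv''⟩

lemma isSemiBranchingBisim_semiBranchingBisimilar :
    IsSemiBranchingBisim tr τ (SemiBranchingBisimilar tr τ) := by
  refine ⟨fun s t ⟨R, hR, hst⟩ => ⟨R, hR, hR.1 hst⟩, ?_⟩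
  rintro s t a s' ⟨R, hR, hst⟩ hstep
  rcases hR.2 s t a s' hst hstep with ⟨ha, t', hp, h₁, h₂⟩ |
    ⟨t', t'', hp, hs, h₁, h₂⟩
  · exact Or.inl ⟨ha, t', hp, ⟨R, hR, h₁⟩, ⟨R, hR, h₂⟩⟩
  · exact Or.inr ⟨t', t'', hp, hs, ⟨R, hR, h₁⟩, ⟨R, hR, h₂⟩⟩

lemma SemiBranchingBisimilar.symm {s t : S} (h : SemiBranchingBisimilar tr τ s t) :
    SemiBranchingBisimilar tr τ t s :=
  isSemiBranchingBisim_semiBranchingBisimilar.1 h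

lemma isSemiBranchingBisim_comp_semiBranchingBisimilar :
    IsSemiBranchingBisim tr τ
      (Relation.Comp (SemiBranchingBisimilar tr τ) (SemiBranchingBisimilar tr τ)) := by
  have hE : IsSemiBranchingBisim tr τ (SemiBranchingBisimilar tr τ) :=
    isSemiBranchingBisim_semiBranchingBisimilar
  refine ⟨fun x z ⟨y, hxy, hyz⟩ => ⟨y, hyz.symm, hxy.symm⟩, ?_⟩
  rintro x z a x' ⟨y, hxy, hyz⟩ hstep
  rcases hE.2 x y a x' hxy hstep with ⟨ha, y', hyy', hxy', hx'y'⟩ |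
    ⟨y', y'', hyy', hstep', hxy', hx'y''⟩
  · obtain ⟨z', hzz', hy'z'⟩ := hE.exists_tauPath hyz hyy'
    exact Or.inl ⟨ha, z', hzz', ⟨y', hxy', hy'z'⟩, ⟨y', hx'y', hy'z'⟩⟩
  · obtain ⟨z', hzz', hy'z'⟩ := hE.exists_tauPath hyz hyy'
    rcases hE.2 y' z' a y'' hy'z' hstep' with ⟨ha, w, hz'w, hy'w, hy''w⟩ |
      ⟨w, w', hz'w, hstep'', hy'w, hy''w'⟩
    · exact Or.inl ⟨ha, w, hzz'.trans hz'w, ⟨y', hxy', hy'w⟩, ⟨y'', hx'y'', hy''w⟩⟩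
    · exact Or.inr
        ⟨w, w', hzz'.trans hz'w, hstep'', ⟨y', hxy', hy'w⟩, ⟨y'', hx'y'', hy''w'⟩⟩

lemma SemiBranchingBisimilar.trans {s t u : S} (hst : SemiBranchingBisimilar tr τ s t)
    (htu : SemiBranchingBisimilar tr τ t u) : SemiBranchingBisimilar tr τ s u :=
  ⟨_, isSemiBranchingBisim_comp_semiBranchingBisimilar, t, hst, htu⟩

variable (tr τ) in
def BetweenBisimilar (p q : S) : Prop :=
  (∃ b, TauPath tr τ q b ∧ SemiBranchingBisimilar tr τ p b) ∧
    ∃ c, TauPath tr τ c q ∧ SemiBranchingBisimilar tr τ p c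

lemma SemiBranchingBisimilar.betweenBisimilar {p q : S}
    (h : SemiBranchingBisimilar tr τ p q) : BetweenBisimilar tr τ p q :=
  ⟨⟨q, .refl, h⟩, ⟨q, .refl, h⟩⟩

lemma isSemiBranchingBisim_betweenBisimilar :
    IsSemiBranchingBisim tr τ
      (fun p q => BetweenBisimilar tr τ p q ∨ BetweenBisimilar tr τ q p) := by
  have hE : IsSemiBranchingBisim tr τ (SemiBranchingBisimilar tr τ) :=
    isSemiBranchingBisim_semiBranchingBisimilar
  refine ⟨fun p q => Or.symm, fun p q a p' hpq hstep => ?_⟩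
  -- `p` is answered from a state after `q`: `b` itself, or the image of `c ⇒ p` under `q ~ c`.
  obtain ⟨q', hqq', hpq'⟩ :
      ∃ q', TauPath tr τ q q' ∧ SemiBranchingBisimilar tr τ p q' := by
    rcases hpq with ⟨⟨b, hqb, hpb⟩, _⟩ | ⟨_, c, hcp, hqc⟩
    · exact ⟨b, hqb, hpb⟩
    · exact hE.exists_tauPath hqc.symm hcp
  rcases hE.2 p q' a p' hpq' hstep with ⟨ha, t, hq't, h₁, h₂⟩ |
    ⟨t, t', hq't, hs, h₁, h₂⟩
  · exact Or.inl
      ⟨ha, t, hqq'.trans hq't, .inl h₁.betweenBisimilar, .inl h₂.betweenBisimilar⟩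
  · exact Or.inr
      ⟨t, t', hqq'.trans hq't, hs, .inl h₁.betweenBisimilar, .inl h₂.betweenBisimilar⟩

lemma SemiBranchingBisimilar.of_tauPath_of_tauPath {s t u t' : S}
    (hst : SemiBranchingBisimilar tr τ s t) (htu : TauPath tr τ t u) (hut' : TauPath tr τ u t')
    (hst' : SemiBranchingBisimilar tr τ s t') : SemiBranchingBisimilar tr τ s u :=
  ⟨_, isSemiBranchingBisim_betweenBisimilar, .inl ⟨⟨t', hut', hst'⟩, ⟨t, htu, hst⟩⟩⟩

lemma isBranchingBisim_semiBranchingBisimilar :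
    IsBranchingBisim tr τ (SemiBranchingBisimilar tr τ) := by
  refine ⟨fun _ _ => SemiBranchingBisimilar.symm, fun s t a s' hst hstep => ?_⟩
  rcases isSemiBranchingBisim_semiBranchingBisimilar.2 s t a s' hst hstep with
    ⟨rfl, t', htt', hst', hs't'⟩ | hmatch
  · -- Answer with the last step `u →τ t'` of `t ⇒ t'`; stuttering gives `s ~ u`.
    rcases Relation.ReflTransGen.cases_tail htt' with rfl | ⟨u, htu, hut'⟩
    · exact Or.inl ⟨rfl, hs't'⟩
    · exact Or.inr
        ⟨u, t', htu, hut', hst.of_tauPath_of_tauPath htu (.single hut') hst', hs't'⟩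
  · exact Or.inr hmatch

lemma branchingBisimilar_iff_semiBranchingBisimilar {s t : S} :
    BranchingBisimilar tr τ s t ↔ SemiBranchingBisimilar tr τ s t :=
  ⟨fun ⟨R, hR, hst⟩ => ⟨R, hR.isSemiBranchingBisim, hst⟩,
    fun h => ⟨_, isBranchingBisim_semiBranchingBisimilar, h⟩⟩

end

theorem branchingBisimilar_equivalence (tr : S → Act → S → Prop) (τ : Act) :
    Equivalence (BranchingBisimilar tr τ) :=
  ⟨fun _ => ⟨_, isBranchingBisim_eq, rfl⟩,
    fun ⟨R, hR, hst⟩ => ⟨R, hR, hR.1 hst⟩,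
    fun hst htu => branchingBisimilar_iff_semiBranchingBisimilar.2 <|
      (branchingBisimilar_iff_semiBranchingBisimilar.1 hst).trans
        (branchingBisimilar_iff_semiBranchingBisimilar.1 htu)⟩
end

section
/- Any two states lying on a common cycle of τ-transitions (i.e., in the same strongly connected component with respect to τ-transitions) are branching bisimilar. -/
universe u v

variable {S : Type u} {Act : Type v}

/-!
If `t` can reach `s` by τ-steps, then `t` matches every move `s →a s'` by first walking to `s`
and then doing the same move, ending in the very same pair of states. Hence any symmetric,
reflexive relation whose pairs are τ-reachable from right to left is a branching bisimulation;
being in the same τ-SCC is such a relation.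
-/

section

variable (tr : S → Act → S → Prop) (τ : Act)

theorem isBranchingBisim_of_refl_of_tauPath {R : S → S → Prop} (hsymm : Symmetric R)
    (hrefl : ∀ x, R x x) (hpath : ∀ ⦃s t⦄, R s t → TauPath tr τ t s) :
    IsBranchingBisim tr τ R :=
  ⟨hsymm, fun _ _ _ s' hR hs => .inr ⟨_, s', hpath hR, hs, hrefl _, hrefl s'⟩⟩

def SameTauSCC (s t : S) : Prop :=
  TauPath tr τ s t ∧ TauPath tr τ t s

theorem isBranchingBisim_sameTauSCC : IsBranchingBisim tr τ (SameTauSCC tr τ) :=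
  isBranchingBisim_of_refl_of_tauPath tr τ (fun _ _ h => ⟨h.2, h.1⟩)
    (fun _ => ⟨.refl, .refl⟩) (fun _ _ h => h.2)

end

theorem tauSCC_branchingBisimilar (tr : S → Act → S → Prop) (τ : Act) (s t : S)
    (hst : TauPath tr τ s t) (hts : TauPath tr τ t s) :
    BranchingBisimilar tr τ s t :=
  ⟨SameTauSCC tr τ, isBranchingBisim_sameTauSCC tr τ, hst, hts⟩
end

section
/- Let Π be a partition of the states of a finite LTS with no τ-cycles inside any block. Suppose Π is stable in the following strong sense: for every block B ∈ Π, every action a, every block B', and every transition s →a s' with s ∈ B, s' ∈ B' that is not inert (i.e., not both a = τ and B = B'), every bottom state t of B has a transition t →a t'' with t'' ∈ B'. Then the equivalence relation induced by Π is a branching bisimulation relation. -/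
/-!
Every state `t` of a block `B` reaches, by τ-steps inside `B`, a bottom state `t'` of `B`: without
inert cycles and with finitely many states, inert τ-steps cannot go on forever. Given `s ≡ t` and a
non-inert step `s →a s'`, stability hands `t'` a matching step `t' →a t''` into the block of `s'`,
and `t ≡ t' ≡ s` along the way.
-/

universe u v

variable {S : Type u} {Act : Type v}

theorem Relation.wellFounded_of_not_transGen_self {α : Type*} [Finite α] (r : α → α → Prop)
    (h : ∀ a, ¬ Relation.TransGen r a a) : WellFounded r :=
  haveI : Std.Irrefl (Relation.TransGen r) := ⟨h⟩
  haveI : IsTrans α (Relation.TransGen r) := ⟨fun _ _ _ => Relation.TransGen.trans⟩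
  Subrelation.wf Relation.TransGen.single (Finite.wellFounded_of_trans_of_irrefl _)

def IsBottomIn (tr : S → Act → S → Prop) (τ : Act) (B : Set S) (t : S) : Prop :=
  t ∈ B ∧ ∀ u ∈ B, ¬ tr t τ u

theorem exists_tauPath_isBottomIn [Finite S] (tr : S → Act → S → Prop) (τ : Act) {B : Set S}
    (hnc : ∀ s, ¬ Relation.TransGen (StepIn tr τ B) s s) {t : S} (ht : t ∈ B) :
    ∃ t', TauPath tr τ t t' ∧ IsBottomIn tr τ B t' := by
  have wf : WellFounded (Function.swap (StepIn tr τ B)) :=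
    Relation.wellFounded_of_not_transGen_self _ fun s hs => hnc s (Relation.transGen_swap.mp hs)
  induction t using wf.induction with
  | _ t ih =>
    obtain ⟨u, hu, htu⟩ | hbot := em (∃ u ∈ B, tr t τ u)
    · obtain ⟨t', hpath, hbot'⟩ := ih u ⟨ht, hu, htu⟩ hu
      exact ⟨t', Relation.ReflTransGen.head htu hpath, hbot'⟩
    · exact ⟨t, Relation.ReflTransGen.refl, ht, fun u hu htu => hbot ⟨u, hu, htu⟩⟩

theorem stable_partition_isBranchingBisim [Finite S]
    (tr : S → Act → S → Prop) (τ : Act)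
    (P : Set (Set S)) (hP : Setoid.IsPartition P)
    (hnc : ∀ B ∈ P, ∀ s, ¬ Relation.TransGen (StepIn tr τ B) s s)
    (hstab : ∀ B ∈ P, ∀ B' ∈ P, ∀ (a : Act) (s s' : S), s ∈ B → s' ∈ B' → tr s a s' →
      ¬(a = τ ∧ B = B') →
      ∀ t ∈ B, (∀ u ∈ B, ¬ tr t τ u) → ∃ t'', tr t a t'' ∧ t'' ∈ B') :
    IsBranchingBisim tr τ (fun s t => ∃ B ∈ P, s ∈ B ∧ t ∈ B) := by
  refine ⟨fun s t ⟨B, hB, hs, ht⟩ => ⟨B, hB, ht, hs⟩, ?_⟩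
  rintro s t a s' ⟨B, hB, hs, ht⟩ hstep
  obtain ⟨B', ⟨hB', hs'⟩, -⟩ := hP.2 s'
  by_cases hinert : a = τ ∧ B = B'
  · exact Or.inl ⟨hinert.1, B, hB, hinert.2 ▸ hs', ht⟩
  obtain ⟨t', hpath, ht', hbot⟩ := exists_tauPath_isBottomIn tr τ (hnc B hB) ht
  obtain ⟨t'', hstep', ht''⟩ := hstab B hB B' hB' a s s' hs hs' hstep hinert t' ht' hbot
  exact Or.inr ⟨t', t'', hpath, hstep', ⟨B, hB, hs, ht'⟩, ⟨B', hB', hs', ht''⟩⟩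
end

section
/- Let R be a branching bisimulation relation that is also an equivalence, let s R t, and suppose s →τ s₁ →τ ... →τ sₙ →a s' is a path where all sᵢ are related to s by R and the final transition sₙ →a s' is not inert (¬(a = τ ∧ s' R sₙ)). Then there exists a path t →τ ... →τ t' →a t'' with s R t' and s' R t''. -/
universe u v

variable {S : Type u} {Act : Type v}

theorem Relation.ReflTransGen.of_and_right {α : Type*} {r : α → α → Prop} {p : α → Prop}
    {a b : α} (ha : p a) (h : Relation.ReflTransGen (fun x y => r x y ∧ p y) a b) : p b := by
  induction h with
  | refl => exact ha
  | tail _ hstep _ => exact hstep.2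

theorem IsBranchingBisim.exists_tauPath_of_not_inert {tr : S → Act → S → Prop} {τ : Act}
    {R : S → S → Prop} (hR : IsBranchingBisim tr τ R)
    (htrans : ∀ {x y z}, R x y → R y z → R x z)
    {s t s' : S} {a : Act} (hst : R s t) (htr : tr s a s') (hni : ¬(a = τ ∧ R s' s)) :
    ∃ t' t'', TauPath tr τ t t' ∧ tr t' a t'' ∧ R s t' ∧ R s' t'' :=
  (hR.2 s t a s' hst htr).resolve_left fun ⟨ha, hs't⟩ => hni ⟨ha, htrans hs't (hR.1 hst)⟩

theorem inertly_reachable_transfer (tr : S → Act → S → Prop) (τ : Act)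
    (R : S → S → Prop) (hR : IsBranchingBisim tr τ R) (hEq : Equivalence R)
    (s t sn : S) (a : Act) (s' : S)
    (hst : R s t)
    (hpath : Relation.ReflTransGen (fun x y => tr x τ y ∧ R s y) s sn)
    (htr : tr sn a s')
    (hni : ¬(a = τ ∧ R s' sn)) :
    ∃ t' t'', TauPath tr τ t t' ∧ tr t' a t'' ∧ R s t' ∧ R s' t'' := by
  have hssn : R s sn := hpath.of_and_right (hEq.refl s)
  obtain ⟨t', t'', hpath', hstep, hsnt', hs't''⟩ :=
    hR.exists_tauPath_of_not_inert hEq.trans (hEq.trans (hEq.symm hssn) hst) htr hni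
  exact ⟨t', t'', hpath', hstep, hEq.trans hssn hsnt', hs't''⟩
end

section
/- Contracting each τ-strongly-connected component of a finite LTS to a single state (removing resulting τ-self-loops) yields an LTS whose states are the SCC-classes and in which every state of the original LTS is branching bisimilar to (the representative of) its class, in the disjoint-union LTS of the original and the quotient. -/
/-!
The symmetric closure of `inl u ~ inr ⟦u⟧` is a branching bisimulation. A step `u →a u'` is
either an inert τ-step inside the class, matched by `⟦u⟧` standing still, or it is mirrored by
the quotient step `⟦u⟧ →a ⟦u'⟧`. Conversely a quotient step out of `⟦u⟧` is realised by some
`v →a v'` with `v` in the class of `u`, and `u` reaches `v` along τ-steps because both lie in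
the same τ-SCC.
-/

universe u v

variable {S : Type u} {Act : Type v}

/-- The τ-strongly-connected-component equivalence. -/
def tauSCCSetoid (tr : S → Act → S → Prop) (τ : Act) : Setoid S where
  r s t := TauPath tr τ s t ∧ TauPath tr τ t s
  iseqv := ⟨fun _ => ⟨Relation.ReflTransGen.refl, Relation.ReflTransGen.refl⟩,
    fun h => ⟨h.2, h.1⟩, fun h g => ⟨h.1.trans g.1, g.2.trans h.2⟩⟩

/-- The transition relation of the quotient LTS (τ-self-loops removed). -/
def quotTr (tr : S → Act → S → Prop) (τ : Act) :
    Quotient (tauSCCSetoid tr τ) → Act → Quotient (tauSCCSetoid tr τ) → Prop :=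
  fun x a y =>
    (∃ u u', Quotient.mk (tauSCCSetoid tr τ) u = x ∧
      Quotient.mk (tauSCCSetoid tr τ) u' = y ∧ tr u a u') ∧ ¬(a = τ ∧ x = y)

/-- The disjoint union of the original LTS and the quotient LTS. -/
def sumTr (tr : S → Act → S → Prop) (τ : Act) :
    (S ⊕ Quotient (tauSCCSetoid tr τ)) → Act → (S ⊕ Quotient (tauSCCSetoid tr τ)) → Prop :=
  fun x a y =>
    match x, y with
    | Sum.inl s, Sum.inl s' => tr s a s'
    | Sum.inr q, Sum.inr q' => quotTr tr τ q a q'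
    | _, _ => False

def sccClassRel (tr : S → Act → S → Prop) (τ : Act) :
    S ⊕ Quotient (tauSCCSetoid tr τ) → S ⊕ Quotient (tauSCCSetoid tr τ) → Prop :=
  fun x y => ∃ u, x = Sum.inl u ∧ y = Sum.inr (Quotient.mk _ u)

variable {tr : S → Act → S → Prop} {τ : Act}

theorem TauPath.inl {u v : S} (h : TauPath tr τ u v) :
    TauPath (sumTr tr τ) τ (Sum.inl u) (Sum.inl v) :=
  Relation.ReflTransGen.lift Sum.inl (fun _ _ hstep => hstep) _ _ h

theorem sumTr_inl_iff {u : S} {a : Act} {x : S ⊕ Quotient (tauSCCSetoid tr τ)} :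
    sumTr tr τ (Sum.inl u) a x ↔ ∃ u', x = Sum.inl u' ∧ tr u a u' := by
  cases x <;> simp [sumTr]

theorem sumTr_inr_iff {q : Quotient (tauSCCSetoid tr τ)} {a : Act}
    {x : S ⊕ Quotient (tauSCCSetoid tr τ)} :
    sumTr tr τ (Sum.inr q) a x ↔ ∃ q', x = Sum.inr q' ∧ quotTr tr τ q a q' := by
  cases x <;> simp [sumTr]

theorem exists_tauPath_of_quotTr {u : S} {a : Act} {q : Quotient (tauSCCSetoid tr τ)}
    (h : quotTr tr τ (Quotient.mk _ u) a q) :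
    ∃ v v', TauPath tr τ u v ∧ tr v a v' ∧
      Quotient.mk (tauSCCSetoid tr τ) v = Quotient.mk _ u ∧ Quotient.mk _ v' = q := by
  obtain ⟨⟨v, v', hv, hv', hstep⟩, -⟩ := h
  exact ⟨v, v', (Quotient.exact hv).2, hstep, hv, hv'⟩

theorem sccClassRel_transfer_inl {u : S} {a : Act} {x : S ⊕ Quotient (tauSCCSetoid tr τ)}
    (h : sumTr tr τ (Sum.inl u) a x) :
    (a = τ ∧ Relation.SymmGen (sccClassRel tr τ) x (Sum.inr (Quotient.mk _ u))) ∨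
      ∃ y y', TauPath (sumTr tr τ) τ (Sum.inr (Quotient.mk _ u)) y ∧ sumTr tr τ y a y' ∧
        Relation.SymmGen (sccClassRel tr τ) (Sum.inl u) y ∧
        Relation.SymmGen (sccClassRel tr τ) x y' := by
  obtain ⟨u', rfl, hstep⟩ := sumTr_inl_iff.mp h
  by_cases hinert : a = τ ∧ Quotient.mk (tauSCCSetoid tr τ) u = Quotient.mk _ u'
  · exact .inl ⟨hinert.1, .of_rel ⟨u', rfl, by rw [hinert.2]⟩⟩
  · have hquot : quotTr tr τ (Quotient.mk _ u) a (Quotient.mk _ u') :=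
      ⟨⟨u, u', rfl, rfl, hstep⟩, hinert⟩
    exact .inr ⟨Sum.inr (Quotient.mk _ u), Sum.inr (Quotient.mk _ u'), .refl, hquot,
      .of_rel ⟨u, rfl, rfl⟩, .of_rel ⟨u', rfl, rfl⟩⟩

theorem sccClassRel_transfer_inr {u : S} {a : Act} {x : S ⊕ Quotient (tauSCCSetoid tr τ)}
    (h : sumTr tr τ (Sum.inr (Quotient.mk _ u)) a x) :
    ∃ y y', TauPath (sumTr tr τ) τ (Sum.inl u) y ∧ sumTr tr τ y a y' ∧
      Relation.SymmGen (sccClassRel tr τ) (Sum.inr (Quotient.mk _ u)) y ∧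
      Relation.SymmGen (sccClassRel tr τ) x y' := by
  obtain ⟨q, rfl, hquot⟩ := sumTr_inr_iff.mp h
  obtain ⟨v, v', hpath, hstep, hv, rfl⟩ := exists_tauPath_of_quotTr hquot
  exact ⟨Sum.inl v, Sum.inl v', hpath.inl, hstep,
    .of_rel_symm ⟨v, rfl, by rw [hv]⟩, .of_rel_symm ⟨v', rfl, rfl⟩⟩

theorem isBranchingBisim_symmGen_sccClassRel :
    IsBranchingBisim (sumTr tr τ) τ (Relation.SymmGen (sccClassRel tr τ)) := by
  refine ⟨fun _ _ => Relation.SymmGen.symm, ?_⟩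
  rintro _ _ a x (⟨u, rfl, rfl⟩ | ⟨u, rfl, rfl⟩) h
  · exact sccClassRel_transfer_inl h
  · exact .inr (sccClassRel_transfer_inr h)

theorem contract_tauSCC_bisimilar_general (tr : S → Act → S → Prop) (τ : Act) (s : S) :
    BranchingBisimilar (sumTr tr τ) τ (Sum.inl s)
      (Sum.inr (Quotient.mk (tauSCCSetoid tr τ) s)) :=
  ⟨_, isBranchingBisim_symmGen_sccClassRel, .of_rel ⟨s, rfl, rfl⟩⟩

theorem contract_tauSCC_bisimilar [Finite S] (tr : S → Act → S → Prop) (τ : Act) (s : S) :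
    BranchingBisimilar (sumTr tr τ) τ (Sum.inl s)
      (Sum.inr (Quotient.mk (tauSCCSetoid tr τ) s)) :=
  contract_tauSCC_bisimilar_general tr τ s
end

section
/- If every bunch in the transition partition consists of exactly one action-block-slice (i.e., all transitions in a bunch share the same action label and the same target block), the state partition is stable under the bunches (every bottom state of a block with a transition in a bunch has a transition in that bunch), there are no inert cycles within blocks, and all non-inert transitions with the same label, same source block and same target block are in the same bunch, then the equivalence induced by the state partition is a branching bisimulation. -/
/-! Symmetry is immediate, and an inert step `s →τ s'` keeps `s'` in the block of `s`, which is
the block of `t`. For a non-inert step `s →a s'` from the block `B` of `t`, follow inert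
steps from `t` to a bottom state `t'` of `B`; one exists because `B` has no inert cycles. The
bunch of `s →a s'` has a transition leaving `B`, so stability gives a transition `t' →a' t''` in
the same bunch, and triviality of that bunch forces `a' = a` with `t''` in the block of `s'`. -/

universe u v

variable {S : Type u} {Act : Type v}

theorem Relation.exists_reflTransGen_forall_not_of_irrefl_transGen {α : Type*} [Finite α]
    {r : α → α → Prop} (hr : ∀ a, ¬ TransGen r a a) (a : α) :
    ∃ b, ReflTransGen r a b ∧ ∀ c, ¬ r b c := by
  have : IsTrans α (flip (TransGen r)) := ⟨fun _ _ _ hab hbc => hbc.trans hab⟩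
  have : Std.Irrefl (flip (TransGen r)) := ⟨hr⟩
  obtain ⟨b, hab, hmin⟩ := (Finite.wellFounded_of_trans_of_irrefl (flip (TransGen r))).has_min
    {b | ReflTransGen r a b} ⟨a, .refl⟩
  exact ⟨b, hab, fun c hbc => hmin c (hab.tail hbc) (.single hbc)⟩

section StepIn

variable {tr : S → Act → S → Prop} {τ : Act} {B : Set S}

theorem StepIn.mem_of_reflTransGen {t t' : S} (ht : t ∈ B)
    (h : Relation.ReflTransGen (StepIn tr τ B) t t') : t' ∈ B := by
  induction h with
  | refl => exact ht
  | tail _ hstep _ => exact hstep.2.1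

theorem StepIn.tauPath_of_reflTransGen {t t' : S}
    (h : Relation.ReflTransGen (StepIn tr τ B) t t') : TauPath tr τ t t' :=
  Relation.ReflTransGen.mono (fun _ _ hstep => hstep.2.2) _ _ h

theorem exists_tauPath_bottom_of_irrefl_transGen_stepIn [Finite S]
    (hB : ∀ s, ¬ Relation.TransGen (StepIn tr τ B) s s) {t : S} (ht : t ∈ B) :
    ∃ t' ∈ B, TauPath tr τ t t' ∧ ∀ u ∈ B, ¬ tr t' τ u := by
  obtain ⟨t', hpath, hbot⟩ := Relation.exists_reflTransGen_forall_not_of_irrefl_transGen hB t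
  have ht' := StepIn.mem_of_reflTransGen ht hpath
  exact ⟨t', ht', StepIn.tauPath_of_reflTransGen hpath, fun u hu htr => hbot u ⟨ht', hu, htr⟩⟩

end StepIn

theorem trivial_bunches_isBranchingBisim_general [Finite S]
    (tr : S → Act → S → Prop) (τ : Act)
    (Ps : Set (Set S)) (hPs : Setoid.IsPartition Ps)
    (Pt : Set (Set (S × Act × S)))
    (hmem : ∀ T ∈ Pt, ∀ p ∈ T, tr p.1 p.2.1 p.2.2 ∧
        ¬(p.2.1 = τ ∧ ∃ B ∈ Ps, p.1 ∈ B ∧ p.2.2 ∈ B))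
    (hcover : ∀ s a s', tr s a s' → ¬(a = τ ∧ ∃ B ∈ Ps, s ∈ B ∧ s' ∈ B) →
        ∃ T ∈ Pt, (s, a, s') ∈ T)
    (htrivial : ∀ T ∈ Pt, ∀ p ∈ T, ∀ q ∈ T,
        p.2.1 = q.2.1 ∧ ∃ B' ∈ Ps, p.2.2 ∈ B' ∧ q.2.2 ∈ B')
    (hstable : ∀ T ∈ Pt, ∀ B ∈ Ps, (∃ p ∈ T, p.1 ∈ B) →
        ∀ t ∈ B, (∀ u ∈ B, ¬ tr t τ u) → ∃ a t', (t, a, t') ∈ T)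
    (hnc : ∀ B ∈ Ps, ∀ s, ¬ Relation.TransGen (StepIn tr τ B) s s) :
    IsBranchingBisim tr τ (fun s t => ∃ B ∈ Ps, s ∈ B ∧ t ∈ B) := by
  refine ⟨fun s t ⟨B, hB, hs, ht⟩ => ⟨B, hB, ht, hs⟩, ?_⟩
  rintro s t a s' ⟨B, hB, hsB, htB⟩ hstep
  by_cases hinert : a = τ ∧ ∃ B' ∈ Ps, s ∈ B' ∧ s' ∈ B'
  · obtain ⟨ha, B', hB', hsB', hs'B'⟩ := hinert
    rw [← Setoid.eq_of_mem_eqv_class hPs.2 hB hsB hB' hsB'] at hs'B'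
    exact .inl ⟨ha, B, hB, hs'B', htB⟩
  obtain ⟨T, hT, hsT⟩ := hcover s a s' hstep hinert
  obtain ⟨t', ht'B, hpath, hbot⟩ := exists_tauPath_bottom_of_irrefl_transGen_stepIn (hnc B hB) htB
  obtain ⟨a', t'', ht'T⟩ := hstable T hT B hB ⟨_, hsT, hsB⟩ t' ht'B hbot
  obtain ⟨rfl, B', hB', hs'B', ht''B'⟩ := htrivial T hT _ hsT _ ht'T
  exact .inr ⟨t', t'', hpath, (hmem T hT _ ht'T).1, ⟨B, hB, hsB, ht'B⟩, ⟨B', hB', hs'B', ht''B'⟩⟩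

theorem trivial_bunches_isBranchingBisim [Finite S]
    (tr : S → Act → S → Prop) (τ : Act)
    (Ps : Set (Set S)) (hPs : Setoid.IsPartition Ps)
    (Pt : Set (Set (S × Act × S)))
    (hmem : ∀ T ∈ Pt, ∀ p ∈ T, tr p.1 p.2.1 p.2.2 ∧
        ¬(p.2.1 = τ ∧ ∃ B ∈ Ps, p.1 ∈ B ∧ p.2.2 ∈ B))
    (hcover : ∀ s a s', tr s a s' → ¬(a = τ ∧ ∃ B ∈ Ps, s ∈ B ∧ s' ∈ B) →
        ∃ T ∈ Pt, (s, a, s') ∈ T)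
    (hdisj : ∀ T ∈ Pt, ∀ T' ∈ Pt, T ≠ T' → Disjoint T T')
    (htrivial : ∀ T ∈ Pt, ∀ p ∈ T, ∀ q ∈ T,
        p.2.1 = q.2.1 ∧ ∃ B' ∈ Ps, p.2.2 ∈ B' ∧ q.2.2 ∈ B')
    (hstable : ∀ T ∈ Pt, ∀ B ∈ Ps, (∃ p ∈ T, p.1 ∈ B) →
        ∀ t ∈ B, (∀ u ∈ B, ¬ tr t τ u) → ∃ a t', (t, a, t') ∈ T)
    (hnc : ∀ B ∈ Ps, ∀ s, ¬ Relation.TransGen (StepIn tr τ B) s s)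
    (hcohesion : ∀ s a s' t t', tr s a s' → tr t a t' →
        ¬(a = τ ∧ ∃ B ∈ Ps, s ∈ B ∧ s' ∈ B) →
        ¬(a = τ ∧ ∃ B ∈ Ps, t ∈ B ∧ t' ∈ B) →
        (∃ B ∈ Ps, s ∈ B ∧ t ∈ B) → (∃ B ∈ Ps, s' ∈ B ∧ t' ∈ B) →
        ∀ T ∈ Pt, (s, a, s') ∈ T → (t, a, t') ∈ T) :
    IsBranchingBisim tr τ (fun s t => ∃ B ∈ Ps, s ∈ B ∧ t ∈ B) :=
  trivial_bunches_isBranchingBisim_general tr τ Ps hPs Pt hmem hcover htrivial hstable hnc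
end
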